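/- The shifted geometric mean with shift S ≥ 0 is at least the (unshifted) geometric mean of the same nonnegative values, with equality when S = 0. -/

import Mathlib

/-!
Write `z i = x i + y i`. Dividing through by `∏ z i ^ w i`, superadditivity of the weighted
geometric mean reduces to AM-GM applied to the fractions `x i / z i` and `y i / z i`, whose
weighted arithmetic means add up to (at most) `∑ w i = 1`. The shifted geometric mean bound is the
case of uniform weights `1 / |I|` and the constant vector `S`, whose geometric mean is `S`.
-/

/-- Shifted geometric mean of `v` over `I` with shift `S`. -/
noncomputable def Shm {ι : Type*} (I : Finset ι) (v : ι → ℝ) (S : ℝ) : ℝ :=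
  (∏ i ∈ I, (v i + S)) ^ ((1 : ℝ) / I.card) - S

/-- Unshifted geometric mean. -/
noncomputable def Gm {ι : Type*} (I : Finset ι) (v : ι → ℝ) : ℝ :=
  (∏ i ∈ I, v i) ^ ((1 : ℝ) / I.card)

namespace Real

variable {ι : Type*} (s : Finset ι)

theorem geom_mean_add_geom_mean_le_geom_mean_add_weighted (w x y : ι → ℝ)
    (hw : ∀ i ∈ s, 0 ≤ w i) (hw' : ∑ i ∈ s, w i = 1) (hx : ∀ i ∈ s, 0 ≤ x i)
    (hy : ∀ i ∈ s, 0 ≤ y i) :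
    ∏ i ∈ s, x i ^ w i + ∏ i ∈ s, y i ^ w i ≤ ∏ i ∈ s, (x i + y i) ^ w i := by
  set z := fun i => x i + y i
  have hz : ∀ i ∈ s, 0 ≤ z i := fun i hi => add_nonneg (hx i hi) (hy i hi)
  -- Factor `x i = (x i / z i) * z i`, which also holds when `z i = 0` since then `x i = 0`.
  have factor : ∀ u : ι → ℝ, (∀ i ∈ s, 0 ≤ u i) → (∀ i ∈ s, u i ≤ z i) →
      ∏ i ∈ s, u i ^ w i = (∏ i ∈ s, (u i / z i) ^ w i) * ∏ i ∈ s, z i ^ w i := by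
    intro u hu huz
    rw [← Finset.prod_mul_distrib]
    refine Finset.prod_congr rfl fun i hi => ?_
    rw [← mul_rpow (div_nonneg (hu i hi) (hz i hi)) (hz i hi)]
    rcases (hz i hi).eq_or_lt with h | h
    · rw [← h, mul_zero, le_antisymm (h ▸ huz i hi) (hu i hi)]
    · rw [div_mul_cancel₀ _ h.ne']
  have hsum : ∑ i ∈ s, w i * (x i / z i) + ∑ i ∈ s, w i * (y i / z i) ≤ 1 := by
    rw [← Finset.sum_add_distrib, ← hw']
    refine Finset.sum_le_sum fun i hi => ?_
    rw [← mul_add, ← add_div]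
    exact mul_le_of_le_one_right (hw i hi) (div_self_le_one _)
  rw [factor x hx fun i hi => le_add_of_nonneg_right (hy i hi),
    factor y hy fun i hi => le_add_of_nonneg_left (hx i hi), ← add_mul]
  refine mul_le_of_le_one_left (Finset.prod_nonneg fun i hi => rpow_nonneg (hz i hi) _) ?_
  refine le_trans (add_le_add ?_ ?_) hsum <;>
    refine geom_mean_le_arith_mean_weighted s w _ hw hw' fun i hi => div_nonneg ?_ (hz i hi)
  exacts [hx i hi, hy i hi]

end Real

section GeometricMean

variable {ι : Type*} {I : Finset ι}

theorem Gm_eq_prod_rpow {v : ι → ℝ} (hv : ∀ i ∈ I, 0 ≤ v i) :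
    Gm I v = ∏ i ∈ I, v i ^ ((1 : ℝ) / I.card) :=
  (Real.finsetProd_rpow I v hv _).symm

theorem Gm_const (hI : I.Nonempty) {c : ℝ} (hc : 0 ≤ c) : Gm I (fun _ => c) = c := by
  have hcard : (I.card : ℝ) ≠ 0 := by exact_mod_cast hI.card_pos.ne'
  rw [Gm, Finset.prod_const, ← Real.rpow_natCast, ← Real.rpow_mul hc, mul_one_div_cancel hcard,
    Real.rpow_one]

theorem Gm_add_le (hI : I.Nonempty) {v w : ι → ℝ} (hv : ∀ i ∈ I, 0 ≤ v i)
    (hw : ∀ i ∈ I, 0 ≤ w i) : Gm I v + Gm I w ≤ Gm I (fun i => v i + w i) := by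
  have hcard : (I.card : ℝ) ≠ 0 := by exact_mod_cast hI.card_pos.ne'
  rw [Gm_eq_prod_rpow hv, Gm_eq_prod_rpow hw,
    Gm_eq_prod_rpow fun i hi => add_nonneg (hv i hi) (hw i hi)]
  refine Real.geom_mean_add_geom_mean_le_geom_mean_add_weighted I _ v w
    (fun _ _ => by positivity) ?_ hv hw
  rw [Finset.sum_const, nsmul_eq_mul, mul_one_div_cancel hcard]

end GeometricMean

theorem shm_ge_gm {ι : Type*} (I : Finset ι) (hI : I.Nonempty) (v : ι → ℝ)
    (hv : ∀ i ∈ I, 0 ≤ v i) (S : ℝ) (hS : 0 ≤ S) :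
    Gm I v ≤ Shm I v S ∧ Shm I v 0 = Gm I v := by
  have hadd := Gm_add_le hI hv fun _ _ => hS
  rw [Gm_const hI hS] at hadd
  exact ⟨le_sub_iff_add_le.mpr hadd, by simp [Shm, Gm]⟩
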